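/- For all s ∈ μ_r, v ∈ A_1, and w ∈ A_r: (zv) ⋄_s (zw) = z(v ⋄_s zw + zv ⋄_s w − z(v ⋄_s w)). -/

import Mathlib

open FreeAlgebra

/-- Alphabet of `A_1 = ℚ⟨x,y⟩`. -/
inductive LetA : Type | x : LetA | y : LetA

/-- Alphabet of `A_r = ℚ⟨x, y_s : s ∈ μ_r⟩`; the group `G` plays the role of `μ_r`. -/
inductive LetR (G : Type) : Type | x : LetR G | y : G → LetR G

/-- `A_1 = ℚ⟨x, y⟩`. -/
abbrev A1 : Type := FreeAlgebra ℚ LetA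

/-- `A_r = ℚ⟨x, y_s : s ∈ μ_r⟩`. -/
abbrev Ar (G : Type) : Type := FreeAlgebra ℚ (LetR G)

noncomputable def X1 : A1 := ι ℚ LetA.x
noncomputable def Y1 : A1 := ι ℚ LetA.y

variable {G : Type} [CommGroup G]

noncomputable def Xr : Ar G := ι ℚ LetR.x
noncomputable def Yr (s : G) : Ar G := ι ℚ (LetR.y s)

/-- `z = x + y_1`. -/
noncomputable def zet : Ar G := Xr + Yr 1

open scoped Classical in
/-- `z_s^δ = x + δ(s) y_s` with `δ(1) = 0`, `δ(s) = 1` otherwise. -/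
noncomputable def zdel (s : G) : Ar G := if s = 1 then Xr else Xr + Yr s

/-- The involutive automorphism `φ` of `A_r`: `φ(x) = z`, `φ(y_s) = z_s^δ - z`. -/
noncomputable def phi : Ar G →ₐ[ℚ] Ar G :=
  lift ℚ (fun l => match l with
    | LetR.x => zet
    | LetR.y s => zdel s - zet)

/-- The natural embedding `A_1 → A_r`, `x ↦ x`, `y ↦ y_1`. -/
noncomputable def jm : A1 →ₐ[ℚ] Ar G :=
  lift ℚ (fun l => match l with
    | LetA.x => Xr
    | LetA.y => Yr 1)

open scoped Classical in
/-- The anti-automorphism `τ` of `A_r`: `τ(x) = y_1`, `τ(y_1) = x`, `τ(y_s) = -y_s` (`s ≠ 1`). -/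
noncomputable def tauR : Ar G →ₗ[ℚ] Ar G :=
  (MulOpposite.opLinearEquiv ℚ).symm.toLinearMap ∘ₗ
    (lift ℚ (fun l => match l with
      | LetR.x => MulOpposite.op (Yr 1)
      | LetR.y s => MulOpposite.op (if s = 1 then Xr else -(Yr s)) ) :
        Ar G →ₐ[ℚ] (Ar G)ᵐᵒᵖ).toLinearMap

/-- The anti-automorphism `τ` of `A_1`: `τ(x) = y`, `τ(y) = x`. -/
noncomputable def tau1 : A1 →ₗ[ℚ] A1 :=
  (MulOpposite.opLinearEquiv ℚ).symm.toLinearMap ∘ₗ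
    (lift ℚ (fun l => match l with
      | LetA.x => MulOpposite.op Y1
      | LetA.y => MulOpposite.op X1) : A1 →ₐ[ℚ] A1ᵐᵒᵖ).toLinearMap

/-- `wordP [(a₁,s₁),...,(a_l,s_l)] = x^{a₁} y_{s₁} ⋯ x^{a_l} y_{s_l}`,
i.e. the word `z_{a₁+1, s₁} ⋯ z_{a_l+1, s_l}`. -/
noncomputable def wordP (L : List (ℕ × G)) : Ar G :=
  (L.map (fun p => Xr ^ p.1 * Yr p.2)).prod

/-- Cumulative-product reindexing of subscripts: this realizes the composition `I ∘ M_s`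
on subscript lists, sending `(s₁, s₂, …, s_l)` to `(s s₁, s s₁ s₂, …, s s₁ ⋯ s_l)`. -/
def cumul : G → List (ℕ × G) → List (ℕ × G)
  | _, [] => []
  | g, p :: L => (p.1, g * p.2) :: cumul (g * p.2) L

/-- All the data entering the definition of the diamond products `⋄_s`:
the harmonic product `*`, the maps `ψ_s = φ ∘ I ∘ M_s`, and the family of
`ℚ`-bilinear diamond products `D s : A_1 × A_r → A_r` (together with the
corestriction `D1` of `⋄_1` to `A_1 × A_1 → A_1`), each characterized by its
defining recursive rules. -/
structure DiamondSetup (G : Type) [CommGroup G] where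
  /-- the harmonic product -/
  hst : Ar G →ₗ[ℚ] Ar G →ₗ[ℚ] Ar G
  one_hst : ∀ w, hst 1 w = w
  hst_one : ∀ v, hst v 1 = v
  hst_xr : ∀ v w, hst (v * Xr) w = hst v w * Xr
  hst_xl : ∀ v w, hst v (w * Xr) = hst v w * Xr
  hst_yy : ∀ (v w : Ar G) (s t : G), hst (v * Yr s) (w * Yr t) =
      hst v (w * Yr t) * Yr s + hst (v * Yr s) w * Yr t + hst v w * (Xr * Yr (s * t))
  /-- the linear automorphisms `ψ_s = φ ∘ I ∘ M_s` -/
  psi : G → (Ar G ≃ₗ[ℚ] Ar G)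
  psi_spec : ∀ (s : G) (L : List (ℕ × G)) (a : ℕ),
      psi s (wordP L * Xr ^ a) = phi (wordP (cumul s L) * Xr ^ a)
  /-- the diamond products `⋄_s : A_1 × A_r → A_r` -/
  D : G → A1 →ₗ[ℚ] Ar G →ₗ[ℚ] Ar G
  one_D : ∀ (s : G) (w : Ar G), D s 1 w = w
  D_one : ∀ (s : G) (v : A1), D s v 1 = psi s (phi (jm v))
  Dxx : ∀ (s : G) (v : A1) (w : Ar G), D s (v * X1) (w * Xr) =
      D s v (w * Xr) * Xr - D s (v * Y1) w * Xr
  Dyx : ∀ (s : G) (v : A1) (w : Ar G), D s (v * Y1) (w * Xr) =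
      D s v (w * Xr) * Yr 1 + D s (v * Y1) w * Xr
  Dxy : ∀ (s : G) (v : A1) (w : Ar G), D s (v * X1) (w * Yr 1) =
      D s v (w * Yr 1) * Xr + D s (v * X1) w * Yr 1
  Dyy : ∀ (s : G) (v : A1) (w : Ar G), D s (v * Y1) (w * Yr 1) =
      D s v (w * Yr 1) * Yr 1 - D s (v * X1) w * Yr 1
  Dxyt : ∀ (s t : G), t ≠ 1 → ∀ (v : A1) (w : Ar G), D s (v * X1) (w * Yr t) =
      D s v (w * Yr t) * Xr + D s v (w * (Xr + Yr t)) * Yr t - D s (v * Y1) w * Yr t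
  Dyyt : ∀ (s t : G), t ≠ 1 → ∀ (v : A1) (w : Ar G), D s (v * Y1) (w * Yr t) =
      D s v (w * Yr t) * Yr 1 - D s v (w * (Xr + Yr t)) * Yr t + D s (v * Y1) w * Yr t
  /-- `⋄_1` as a product `A_1 × A_1 → A_1` -/
  D1 : A1 →ₗ[ℚ] A1 →ₗ[ℚ] A1
  D1_spec : ∀ u v : A1, jm (D1 u v) = D 1 u (jm v)

/-!
Put `B(v, w) = (zv) ⋄_s w − z (v ⋄_s w)` (this is `zComm`); the claim is `B(v, zw) = z B(v, w)`.

The recursion rules of `⋄_s` only involve the last letters of the two arguments, so every bilinear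
map built from `⋄_s` by left multiplications obeys them too, and such a map vanishes as soon as it
vanishes on `1 × A_r` and on `A_1 × 1`. This applies to `Θ(v, w) = B(v, zw) − z B(v, w)`.
On `1 × A_r` it reduces to `(x + y) ⋄_s w = w z`, which the rules give directly. On `A_1 × 1`:
first `B(v, 1) = 0`, because `φ(x + y_1) = x` and `ψ_s(x u) = z ψ_s(u)` (the reindexing `I ∘ M_s`
does not see a leading `x`, and `φ(x) = z`); with `B(·, 1) = 0` the rules force
`B(v, z) = B(1, z) v`, and `B(1, z) = zz - zz = 0`.
-/

@[elab_as_elim]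
theorem FreeAlgebra.induction_mul_ι {R X : Type*} [CommSemiring R]
    {motive : FreeAlgebra R X → Prop} (one : motive 1)
    (mul_ι : ∀ u x, motive u → motive (u * ι R x))
    (add : ∀ u v, motive u → motive v → motive (u + v))
    (smul : ∀ (r : R) u, motive u → motive (r • u)) (a : FreeAlgebra R X) : motive a := by
  suffices h : ∀ u, motive u → motive (u * a) by simpa using h 1 one
  induction a with
  | grade0 r =>
    intro u hu
    rw [← Algebra.commutes, ← Algebra.smul_def]
    exact smul r u hu
  | grade1 x => exact fun u => mul_ι u x
  | mul a b ha hb => exact fun u hu => mul_assoc u a b ▸ hb _ (ha u hu)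
  | add a b ha hb => exact fun u hu => (mul_add u a b).symm ▸ add _ _ (ha u hu) (hb u hu)

lemma phi_Xr : phi (Xr : Ar G) = zet := lift_ι_apply _ _

lemma jm_X1 : jm X1 = (Xr : Ar G) := lift_ι_apply _ _

lemma jm_Y1 : jm Y1 = (Yr 1 : Ar G) := lift_ι_apply _ _

lemma phi_jm_X1_add_Y1 : phi (jm (X1 + Y1)) = (Xr : Ar G) := by
  have phi_Yr_one : phi (Yr (1 : G)) = Xr - zet := by
    rw [Yr, phi, lift_ι_apply]
    exact congrArg (· - zet) (if_pos rfl)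
  rw [map_add, jm_X1, jm_Y1, map_add, phi_Xr, phi_Yr_one, add_sub_cancel]

lemma span_wordP_mul_pow {Γ : Type} :
    Submodule.span ℚ (Set.range fun p : List (ℕ × Γ) × ℕ => wordP p.1 * Xr ^ p.2) =
      ⊤ := by
  refine Submodule.eq_top_iff'.2 fun u => ?_
  induction u using FreeAlgebra.induction_mul_ι with
  | one => exact Submodule.subset_span ⟨([], 0), by simp [wordP]⟩
  | mul_ι u l hu =>
    refine Submodule.span_mono ?_ (Submodule.apply_mem_span_image_of_mem_span
      (LinearMap.mulRight ℚ (ι ℚ l)) hu)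
    rintro _ ⟨_, ⟨⟨L, a⟩, rfl⟩, rfl⟩
    cases l with
    | x => exact ⟨(L, a + 1), by simp only [LinearMap.mulRight_apply, pow_succ, mul_assoc]; rfl⟩
    | y t =>
      exact ⟨(L ++ [(a, t)], 0), by simp [wordP, Yr, mul_assoc]⟩
  | add u v hu hv => exact Submodule.add_mem _ hu hv
  | smul r u hu => exact Submodule.smul_mem _ r hu

structure IsDiamondRecursive (B : A1 →ₗ[ℚ] Ar G →ₗ[ℚ] Ar G) : Prop where
  xx : ∀ v w, B (v * X1) (w * Xr) = B v (w * Xr) * Xr - B (v * Y1) w * Xr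
  yx : ∀ v w, B (v * Y1) (w * Xr) = B v (w * Xr) * Yr 1 + B (v * Y1) w * Xr
  xy : ∀ v w, B (v * X1) (w * Yr 1) = B v (w * Yr 1) * Xr + B (v * X1) w * Yr 1
  yy : ∀ v w, B (v * Y1) (w * Yr 1) = B v (w * Yr 1) * Yr 1 - B (v * X1) w * Yr 1
  xyt : ∀ t : G, t ≠ 1 → ∀ v w, B (v * X1) (w * Yr t) =
      B v (w * Yr t) * Xr + B v (w * (Xr + Yr t)) * Yr t - B (v * Y1) w * Yr t
  yyt : ∀ t : G, t ≠ 1 → ∀ v w, B (v * Y1) (w * Yr t) =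
      B v (w * Yr t) * Yr 1 - B v (w * (Xr + Yr t)) * Yr t + B (v * Y1) w * Yr t

namespace IsDiamondRecursive

variable {B C : A1 →ₗ[ℚ] Ar G →ₗ[ℚ] Ar G}

lemma sub (hB : IsDiamondRecursive B) (hC : IsDiamondRecursive C) :
    IsDiamondRecursive (B - C) := by
  obtain ⟨hB₁, hB₂, hB₃, hB₄, hB₅, hB₆⟩ := hB
  obtain ⟨hC₁, hC₂, hC₃, hC₄, hC₅, hC₆⟩ := hC
  constructor <;> intros <;> simp only [ne_eq, not_false_eq_true, LinearMap.sub_apply, *] <;>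
    noncomm_ring

lemma comp_mulLeft (hB : IsDiamondRecursive B) (c : A1) :
    IsDiamondRecursive (B ∘ₗ LinearMap.mulLeft ℚ c) := by
  obtain ⟨h₁, h₂, h₃, h₄, h₅, h₆⟩ := hB
  constructor <;> intros <;>
    simp only [ne_eq, not_false_eq_true, LinearMap.comp_apply, LinearMap.mulLeft_apply,
      ← mul_assoc, *]

lemma compl₂_mulLeft (hB : IsDiamondRecursive B) (c : Ar G) :
    IsDiamondRecursive (B.compl₂ (LinearMap.mulLeft ℚ c)) := by
  obtain ⟨h₁, h₂, h₃, h₄, h₅, h₆⟩ := hB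
  constructor <;> intros <;>
    simp only [ne_eq, not_false_eq_true, LinearMap.compl₂_apply, LinearMap.mulLeft_apply,
      ← mul_assoc, *]

lemma compr₂_mulLeft (hB : IsDiamondRecursive B) (c : Ar G) :
    IsDiamondRecursive (B.compr₂ (LinearMap.mulLeft ℚ c)) := by
  obtain ⟨h₁, h₂, h₃, h₄, h₅, h₆⟩ := hB
  constructor <;> intros <;>
    simp only [ne_eq, not_false_eq_true, LinearMap.compr₂_apply, LinearMap.mulLeft_apply, *] <;>
    noncomm_ring

lemma apply_mul_ι_mul_ι_eq_zero (hB : IsDiamondRecursive B) {v : A1} {w : Ar G}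
    (hx : B v (w * Xr) = 0) (hy : ∀ t, B v (w * Yr t) = 0) (hw : ∀ p, B (v * p) w = 0)
    (l : LetA) (u : LetR G) : B (v * ι ℚ l) (w * ι ℚ u) = 0 := by
  have hxy (t : G) : B v (w * (Xr + Yr t)) = 0 := by rw [mul_add, map_add, hx, hy, add_zero]
  rcases l with _ | _ <;> rcases u with _ | t
  · change B (v * X1) (w * Xr) = 0
    simp [hB.xx, hx, hw]
  · change B (v * X1) (w * Yr t) = 0
    obtain rfl | ht := eq_or_ne t 1
    · simp [hB.xy, hy, hw]
    · simp [hB.xyt t ht, hy, hxy, hw]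
  · change B (v * Y1) (w * Xr) = 0
    simp [hB.yx, hx, hw]
  · change B (v * Y1) (w * Yr t) = 0
    obtain rfl | ht := eq_or_ne t 1
    · simp [hB.yy, hy, hw]
    · simp [hB.yyt t ht, hy, hxy, hw]

lemma eq_zero (hB : IsDiamondRecursive B) (h₁ : ∀ w, B 1 w = 0) (h₂ : ∀ v, B v 1 = 0)
    (v : A1) (w : Ar G) : B v w = 0 := by
  induction w using FreeAlgebra.induction_mul_ι generalizing v with
  | one => exact h₂ v
  | mul_ι w u ihw =>
    suffices ∀ u, B v (w * ι ℚ u) = 0 from this u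
    induction v using FreeAlgebra.induction_mul_ι with
    | one => exact fun _ => h₁ _
    | mul_ι v l ihv =>
      exact hB.apply_mul_ι_mul_ι_eq_zero (ihv .x) (fun t => ihv (.y t)) (fun p => ihw (v * p)) l
    | add v v' hv hv' =>
      intro u
      rw [map_add, LinearMap.add_apply, hv, hv', add_zero]
    | smul r v hv =>
      intro u
      rw [map_smul, LinearMap.smul_apply, hv, smul_zero]
  | add w w' hw hw' => rw [map_add, hw, hw', add_zero]
  | smul r w hw => rw [map_smul, hw, smul_zero]

lemma apply_X1_add_Y1_mul_ι (hB : IsDiamondRecursive B) (w : Ar G) (u : LetR G) :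
    B (X1 + Y1) (w * ι ℚ u) = B 1 (w * ι ℚ u) * zet := by
  rw [map_add, LinearMap.add_apply, ← one_mul X1, ← one_mul Y1, zet]
  rcases u with _ | t
  · change B (1 * X1) (w * Xr) + B (1 * Y1) (w * Xr) = B 1 (w * Xr) * (Xr + Yr 1)
    rw [hB.xx, hB.yx]
    noncomm_ring
  · change B (1 * X1) (w * Yr t) + B (1 * Y1) (w * Yr t) = B 1 (w * Yr t) * (Xr + Yr 1)
    obtain rfl | ht := eq_or_ne t 1
    · rw [hB.xy, hB.yy]
      noncomm_ring
    · rw [hB.xyt t ht, hB.yyt t ht]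
      noncomm_ring

lemma apply_zet (hB : IsDiamondRecursive B) (h : ∀ v, B v 1 = 0) (v : A1) :
    B v zet = B 1 zet * jm v := by
  induction v using FreeAlgebra.induction_mul_ι with
  | one => rw [map_one jm, mul_one]
  | mul_ι v l ih =>
    rw [map_mul jm, ← mul_assoc, ← ih, zet, ← one_mul Xr, ← one_mul (Yr 1), map_add]
    rcases l with _ | _
    · change B (v * X1) (1 * Xr) + B (v * X1) (1 * Yr 1) = _ * jm X1
      rw [hB.xx, hB.xy, h, h, jm_X1, one_mul, one_mul, map_add]
      noncomm_ring
    · change B (v * Y1) (1 * Xr) + B (v * Y1) (1 * Yr 1) = _ * jm Y1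
      rw [hB.yx, hB.yy, h, h, jm_Y1, one_mul, one_mul, map_add]
      noncomm_ring
  | add v v' hv hv' => rw [map_add, LinearMap.add_apply, hv, hv', map_add, mul_add]
  | smul r v hv => rw [map_smul, LinearMap.smul_apply, hv, map_smul, mul_smul_comm]

end IsDiamondRecursive

namespace DiamondSetup

variable (S : DiamondSetup G) (s : G)

lemma isDiamondRecursive_D :
    IsDiamondRecursive (S.D s) :=
  ⟨S.Dxx s, S.Dyx s, S.Dxy s, S.Dyy s, S.Dxyt s, S.Dyyt s⟩

lemma psi_Xr_mul_wordP_mul_pow (L : List (ℕ × G)) (a : ℕ) :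
    S.psi s (Xr * (wordP L * Xr ^ a)) = zet * S.psi s (wordP L * Xr ^ a) := by
  rcases L with _ | ⟨⟨b, t⟩, L⟩
  · have h : Xr * (wordP [] * Xr ^ a) = wordP ([] : List (ℕ × G)) * Xr ^ (a + 1) := by
      simp [wordP, pow_succ']
    rw [h, S.psi_spec, S.psi_spec]
    simp [cumul, wordP, pow_succ', phi_Xr]
  · have h : Xr * (wordP ((b, t) :: L) * Xr ^ a) = wordP ((b + 1, t) :: L) * Xr ^ a := by
      simp [wordP, pow_succ', mul_assoc]
    rw [h, S.psi_spec, S.psi_spec]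
    simp [cumul, wordP, pow_succ', mul_assoc, phi_Xr]

lemma psi_Xr_mul (u : Ar G) : S.psi s (Xr * u) = zet * S.psi s u :=
  LinearMap.congr_fun (LinearMap.ext_on_range span_wordP_mul_pow
    (f := (S.psi s).toLinearMap ∘ₗ LinearMap.mulLeft ℚ Xr)
    (g := LinearMap.mulLeft ℚ zet ∘ₗ (S.psi s).toLinearMap)
    fun p => S.psi_Xr_mul_wordP_mul_pow s p.1 p.2) u

lemma D_X1_add_Y1 (w : Ar G) : S.D s (X1 + Y1) w = w * zet := by
  induction w using FreeAlgebra.induction_mul_ι with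
  | one =>
    have h := S.psi_spec s [] 1
    simp only [wordP, cumul, List.map_nil, List.prod_nil, pow_one, one_mul, phi_Xr] at h
    rw [S.D_one, phi_jm_X1_add_Y1, h, one_mul]
  | mul_ι w u _ => rw [(S.isDiamondRecursive_D s).apply_X1_add_Y1_mul_ι, S.one_D]
  | add w w' hw hw' => rw [map_add, hw, hw', add_mul]
  | smul r w hw => rw [map_smul, hw, smul_mul_assoc]

lemma D_X1_add_Y1_mul_one (v : A1) : S.D s ((X1 + Y1) * v) 1 = zet * S.D s v 1 := by
  rw [S.D_one, S.D_one, map_mul, map_mul, phi_jm_X1_add_Y1, psi_Xr_mul]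

noncomputable def zComm : A1 →ₗ[ℚ] Ar G →ₗ[ℚ] Ar G :=
  S.D s ∘ₗ LinearMap.mulLeft ℚ (X1 + Y1) - (S.D s).compr₂ (LinearMap.mulLeft ℚ zet)

lemma zComm_apply (v : A1) (w : Ar G) :
    S.zComm s v w = S.D s ((X1 + Y1) * v) w - zet * S.D s v w := rfl

lemma isDiamondRecursive_zComm : IsDiamondRecursive (S.zComm s) :=
  ((S.isDiamondRecursive_D s).comp_mulLeft _).sub ((S.isDiamondRecursive_D s).compr₂_mulLeft _)

lemma zComm_one_left (w : Ar G) : S.zComm s 1 w = w * zet - zet * w := by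
  rw [zComm_apply, mul_one, D_X1_add_Y1, S.one_D]

lemma zComm_one_right (v : A1) : S.zComm s v 1 = 0 := by
  rw [zComm_apply, D_X1_add_Y1_mul_one, sub_self]

lemma zComm_zet (v : A1) : S.zComm s v zet = 0 := by
  rw [(S.isDiamondRecursive_zComm s).apply_zet (S.zComm_one_right s), zComm_one_left, sub_self,
    zero_mul]

lemma zComm_zet_mul (v : A1) (w : Ar G) : S.zComm s v (zet * w) = zet * S.zComm s v w := by
  set Θ := (S.zComm s).compl₂ (LinearMap.mulLeft ℚ zet) -
    (S.zComm s).compr₂ (LinearMap.mulLeft ℚ zet)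
  have hΘ : IsDiamondRecursive Θ :=
    ((S.isDiamondRecursive_zComm s).compl₂_mulLeft _).sub
      ((S.isDiamondRecursive_zComm s).compr₂_mulLeft _)
  have h₁ (w : Ar G) : Θ 1 w = 0 := by
    simp only [Θ, LinearMap.sub_apply, LinearMap.compl₂_apply, LinearMap.compr₂_apply,
      LinearMap.mulLeft_apply, zComm_one_left]
    noncomm_ring
  have h₂ (v : A1) : Θ v 1 = 0 := by
    simp [Θ, zComm_zet, zComm_one_right]
  simpa [Θ, sub_eq_zero] using hΘ.eq_zero h₁ h₂ v w

end DiamondSetup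

/-- For all `s ∈ μ_r`, `v ∈ A_1`, `w ∈ A_r`:
`(zv) ⋄_s (zw) = z(v ⋄_s zw + zv ⋄_s w − z(v ⋄_s w))`. -/
theorem statement13 {G : Type} [CommGroup G] (S : DiamondSetup G)
    (s : G) (v : A1) (w : Ar G) :
    S.D s ((X1 + Y1) * v) (zet * w) =
      zet * (S.D s v (zet * w) + S.D s ((X1 + Y1) * v) w - zet * S.D s v w) := by
  have h := S.zComm_zet_mul s v w
  rw [S.zComm_apply, S.zComm_apply, sub_eq_iff_eq_add] at h
  rw [h]
  noncomm_ring
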